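/- arXiv:2504.09552 — 2 statements merged into one kernel-verified Lean document; each statement's English description precedes it below -/
import Mathlib

section
/- Let V = ℂ³ × ℂ³ × ℂ × ℂ × ℂ with coordinates (x₁,x₂,x₃,y₁,y₂,y₃,p,u,v). The common vanishing locus in V of the functions xᵢ yⱼ v², yⱼ u v, and p u⁶ yⱼ⁶ (for all 1 ≤ i, j ≤ 3) is exactly the union of the four linear subvarieties {(y₁,y₂,y₃) = 0} ∪ {(u,v) = 0} ∪ {(x₁,x₂,x₃,u) = 0} ∪ {(p,v) = 0}. In other words, a point (x,y,p,u,v) ∈ ℂ⁹ satisfies xᵢ yⱼ v² = 0, yⱼ u v = 0 and p u⁶ yⱼ⁶ = 0 for all 1 ≤ i, j ≤ 3 if and only if (y₁,y₂,y₃) = 0, or (u,v) = 0, or (x₁,x₂,x₃,u) = 0, or (p,v) = 0. -/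
/-!
Every generator is a monomial, so over a domain a point lies in the vanishing locus exactly when,
for each generator, one of its variables vanishes. The theorem thus reduces to a statement in
propositional logic about which coordinates are zero: if some `yⱼ ≠ 0`, then `yⱼ u v = 0` forces
`u = 0` or `v = 0`; when `v ≠ 0` the generators `xᵢ yⱼ v²` kill every `xᵢ`, and when `u ≠ 0` the
generator `p u⁶ yⱼ⁶` kills `p`.
-/

theorem forall_vanishing_pattern_iff {ι κ : Type*} [Nonempty ι] (X : ι → Prop) (Y : κ → Prop)
    (P U V : Prop) :
    (∀ i j, ((X i ∨ Y j) ∨ V) ∧ ((Y j ∨ U) ∨ V) ∧ ((P ∨ U) ∨ Y j)) ↔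
      (∀ j, Y j) ∨ (U ∧ V) ∨ ((∀ i, X i) ∧ U) ∨ (P ∧ V) := by
  constructor
  · intro h
    by_cases hY : ∀ j, Y j
    · exact Or.inl hY
    obtain ⟨j, hj⟩ := not_forall.mp hY
    obtain ⟨i₀⟩ := ‹Nonempty ι›
    have hX : (∀ i, X i) ∨ V := forall_or_right.mp fun i ↦ by have := (h i j).1; tauto
    have := h i₀ j
    tauto
  · rintro (hY | ⟨hU, hV⟩ | ⟨hX, hU⟩ | ⟨hP, hV⟩) i j
    · simp [hY j]
    · simp [hU, hV]
    · simp [hX i, hU]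
    · simp [hP, hV]

/-- The common vanishing locus in `V = ℂ³ × ℂ³ × ℂ × ℂ × ℂ` of the functions
`xᵢ yⱼ v²`, `yⱼ u v`, `p u⁶ yⱼ⁶` (for `1 ≤ i, j ≤ 3`) is exactly the union
`{y = 0} ∪ {(u,v) = 0} ∪ {(x,u) = 0} ∪ {(p,v) = 0}`. -/
theorem unstable_locus_eq_union (x y : Fin 3 → ℂ) (p u v : ℂ) :
    (∀ i j : Fin 3,
        x i * y j * v ^ 2 = 0 ∧ y j * u * v = 0 ∧ p * u ^ 6 * y j ^ 6 = 0) ↔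
      (y = 0 ∨ (u = 0 ∧ v = 0) ∨ (x = 0 ∧ u = 0) ∨ (p = 0 ∧ v = 0)) := by
  simp only [mul_eq_zero, pow_eq_zero_iff two_ne_zero, pow_eq_zero_iff (by norm_num : 6 ≠ 0),
    funext_iff, Pi.zero_apply]
  exact forall_vanishing_pattern_iff _ _ _ _ _
end

section
/- Let V = ℂ³ × ℂ³ × ℂ × ℂ × ℂ with coordinates (x,y,p,u,v) where x = (x₁,x₂,x₃), y = (y₁,y₂,y₃), and let G = (ℂ*)³ act on V by (s₁,s₂,s₃)·(x,y,p,u,v) = (s₁x, s₂y, s₁⁻³s₂⁻³p, s₁s₃u, s₃v). Suppose the point (x,y,p,u,v) is stable, i.e. it does NOT lie in the union {y = 0} ∪ {(u,v) = 0} ∪ {(x,u) = 0} ∪ {(p,v) = 0}. Then the following are equivalent: (i) for every t ∈ ℂ* there exists g ∈ G with g·(x,y,p,tu,v) = (x,y,p,u,v) (i.e. the G-orbit of the point is fixed by the ℂ*-action scaling the u-coordinate); (ii) u = 0, or v = 0, or (x = 0 and p = 0). -/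
/-!
If `u ≠ 0` and `v ≠ 0`, an element `(s₁,s₂,s₃)` moving `(x,y,p,tu,v)` back to `(x,y,p,u,v)` is
pinned down by `v`, `y` and `u`: `s₃ = 1`, `s₂ = 1` (stability gives `y ≠ 0`) and `s₁ = t⁻¹`.
For `t = 2` it then scales `x` by `1/2` and `p` by `8`, so `x = 0` and `p = 0`. Conversely, on
each fixed component an explicit one-parameter subgroup of `G` undoes the scaling of `u`:
`s₃ = t⁻¹` when `v = 0`, and `s₁ = t⁻¹` when `x = 0` and `p = 0`.
-/

section Field

variable {K ι κ : Type*} [Field K]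

lemma weights_eq_of_moves_back {y : κ → K} {u v t s₁ s₂ s₃ : K}
    (hy : y ≠ 0) (hu : u ≠ 0) (hv : v ≠ 0)
    (hys : s₂ • y = y) (hus : s₁ * s₃ * (t * u) = u) (hvs : s₃ * v = v) :
    s₂ = 1 ∧ s₃ = 1 ∧ s₁ * t = 1 := by
  have hs₂ : s₂ = 1 := (smul_left_inj hy).1 (by rwa [one_smul])
  have hs₃ : s₃ = 1 := (mul_eq_right₀ hv).1 hvs
  refine ⟨hs₂, hs₃, (mul_eq_right₀ hu).1 ?_⟩
  rw [hs₃] at hus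
  linear_combination hus

lemma eq_zero_and_eq_zero_of_moves_back {x : ι → K} {y : κ → K} {p u v t s₁ s₂ s₃ : K}
    (hy : y ≠ 0) (hu : u ≠ 0) (hv : v ≠ 0) (ht : t ≠ 1) (ht₃ : t ^ 3 ≠ 1)
    (hxs : s₁ • x = x) (hys : s₂ • y = y) (hps : s₁⁻¹ ^ 3 * s₂⁻¹ ^ 3 * p = p)
    (hus : s₁ * s₃ * (t * u) = u) (hvs : s₃ * v = v) :
    x = 0 ∧ p = 0 := by
  obtain ⟨rfl, -, hs₁t⟩ := weights_eq_of_moves_back hy hu hv hys hus hvs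
  have hs₁ : s₁⁻¹ = t := inv_eq_of_mul_eq_one_right hs₁t
  constructor
  · by_contra hx
    have hs₁_one : s₁ = 1 := (smul_left_inj hx).1 (by rwa [one_smul])
    exact ht (by rw [← hs₁, hs₁_one, inv_one])
  · rw [hs₁, inv_one, one_pow, mul_one] at hps
    exact (mul_left_eq_self₀.1 hps).resolve_left ht₃

end Field

/-- For a stable point `(x,y,p,u,v)` of `V = ℂ³ × ℂ³ × ℂ × ℂ × ℂ` under the
`G = (ℂ*)³`-action `(s₁,s₂,s₃)·(x,y,p,u,v) = (s₁x, s₂y, s₁⁻³s₂⁻³p, s₁s₃u, s₃v)`,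
the `G`-orbit of the point is fixed by the `ℂ*`-action scaling the `u`-coordinate
if and only if `u = 0`, or `v = 0`, or `(x = 0 ∧ p = 0)`. -/
theorem fixed_locus_of_Cstar_action (x y : Fin 3 → ℂ) (p u v : ℂ)
    (hstab : ¬ y = 0 ∧ ¬ (u = 0 ∧ v = 0) ∧ ¬ (x = 0 ∧ u = 0) ∧ ¬ (p = 0 ∧ v = 0)) :
    (∀ t : ℂ, t ≠ 0 → ∃ s₁ s₂ s₃ : ℂ, s₁ ≠ 0 ∧ s₂ ≠ 0 ∧ s₃ ≠ 0 ∧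
        (fun i => s₁ * x i) = x ∧
        (fun j => s₂ * y j) = y ∧
        s₁⁻¹ ^ 3 * s₂⁻¹ ^ 3 * p = p ∧
        s₁ * s₃ * (t * u) = u ∧
        s₃ * v = v) ↔
      (u = 0 ∨ v = 0 ∨ (x = 0 ∧ p = 0)) := by
  constructor
  · intro hfix
    refine or_iff_not_imp_left.2 fun hu => or_iff_not_imp_left.2 fun hv => ?_
    obtain ⟨s₁, s₂, s₃, -, -, -, hxs, hys, hps, hus, hvs⟩ := hfix 2 two_ne_zero
    exact eq_zero_and_eq_zero_of_moves_back hstab.1 hu hv (by norm_num) (by norm_num)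
      hxs hys hps hus hvs
  · rintro (hu | hv | ⟨rfl, rfl⟩) t ht
    · exact ⟨1, 1, 1, by simp [hu]⟩
    · exact ⟨1, 1, t⁻¹, by simp [hv, ht]⟩
    · exact ⟨t⁻¹, 1, 1, by simp [ht, Pi.zero_def]⟩
end
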